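/- Let G be the 3-SAT total-bondage construction as above. Then γ_t(G) = 2n + 2 if and only if b_t(G) = 1, where b_t(G) is the total bondage number. -/
import Mathlib


/-- A literal over `n` variables: a variable index together with a polarity
(`true` = the positive literal `uᵢ`, `false` = the negated literal `ūᵢ`). -/
abbrev Lit (n : ℕ) := Fin n × Bool

/-- Vertex type of the total-bondage construction: literal vertices `uᵢ, ūᵢ`,
gadget vertices `vᵢ` (second component `false`) and `vᵢ'` (second component
`true`), clause vertices `cⱼ`, and the vertices `s₁, …, s₅`. -/
abbrev TVert (n m : ℕ) := Lit n ⊕ ((Fin n × Bool) ⊕ (Fin m ⊕ Fin 5))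

/-- The literal vertex `uᵢ` (if `b = true`) or `ūᵢ` (if `b = false`). -/
def tlit {n m : ℕ} (i : Fin n) (b : Bool) : TVert n m := Sum.inl (i, b)

/-- The gadget vertex `vᵢ`. -/
def tvv {n m : ℕ} (i : Fin n) : TVert n m := Sum.inr (Sum.inl (i, false))

/-- The gadget vertex `vᵢ'`. -/
def tvv' {n m : ℕ} (i : Fin n) : TVert n m := Sum.inr (Sum.inl (i, true))

/-- The clause vertex `cⱼ`. -/
def tcv {n m : ℕ} (j : Fin m) : TVert n m := Sum.inr (Sum.inr (Sum.inl j))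

/-- The vertex `s₍ₖ₊₁₎` for `k : Fin 5` (so `tsv 0 = s₁`, …, `tsv 4 = s₅`). -/
def tsv {n m : ℕ} (k : Fin 5) : TVert n m := Sum.inr (Sum.inr (Sum.inr k))

/-- Base adjacency relation of the total-bondage construction (symmetrized by
`fromRel`): gadget edges `vᵢuᵢ, uᵢūᵢ, ūᵢvᵢ, vᵢvᵢ'`; clause edges joining `cⱼ`
to its three literals; gadget `H` edges `s₁s₂, s₁s₄, s₂s₃, s₂s₄, s₄s₅`; and the
edges joining `s₁` and `s₃` to every `cⱼ`. -/
def totRel {n m : ℕ} (C : Fin m → Fin 3 → Lit n) : TVert n m → TVert n m → Prop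
  | Sum.inl (i, b), Sum.inl (i', b') => i = i' ∧ b ≠ b'
  | Sum.inl (i, _), Sum.inr (Sum.inl (i', c)) => i = i' ∧ c = false
  | Sum.inr (Sum.inl (i, false)), Sum.inr (Sum.inl (i', true)) => i = i'
  | Sum.inl l, Sum.inr (Sum.inr (Sum.inl j)) => ∃ k, C j k = l
  | Sum.inr (Sum.inr (Sum.inr p)), Sum.inr (Sum.inr (Sum.inr q)) =>
      (p = 0 ∧ q = 1) ∨ (p = 0 ∧ q = 3) ∨ (p = 1 ∧ q = 2) ∨ (p = 1 ∧ q = 3) ∨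
        (p = 3 ∧ q = 4)
  | Sum.inr (Sum.inr (Sum.inr p)), Sum.inr (Sum.inr (Sum.inl _)) => p = 0 ∨ p = 2
  | _, _ => False

/-- The graph of the total-bondage construction associated with a 3-SAT instance `C`. -/
def totGraph {n m : ℕ} (C : Fin m → Fin 3 → Lit n) : SimpleGraph (TVert n m) :=
  SimpleGraph.fromRel (totRel C)

/-- `D` is a total dominating set of `G`: every vertex of `G` (including the
vertices of `D`) has a neighbor in `D`. -/
def IsTotalDomSet {V : Type*} (G : SimpleGraph V) (D : Finset V) : Prop :=
  ∀ v : V, ∃ u ∈ D, G.Adj u v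

/-- The total domination number of `G`: the minimum cardinality of a total
dominating set. -/
noncomputable def totalDomNum {V : Type*} (G : SimpleGraph V) : ℕ :=
  sInf {k | ∃ D : Finset V, IsTotalDomSet G D ∧ D.card = k}

/-- The total bondage number of `G`: the minimum number of edges whose removal
from `G` results in a graph with strictly larger total domination number. -/
noncomputable def totalBondage {V : Type*} (G : SimpleGraph V) : ℕ :=
  sInf {k | ∃ F : Finset (Sym2 V), ↑F ⊆ G.edgeSet ∧ F.card = k ∧
    totalDomNum G < totalDomNum (G.deleteEdges ↑F)}

namespace TBaux
variable {n m : ℕ} {C : Fin m → Fin 3 → Lit n}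

lemma adj_iff {F : Set (Sym2 (TVert n m))} {u v : TVert n m} :
    ((totGraph C).deleteEdges F).Adj u v ↔
      (u ≠ v ∧ (totRel C u v ∨ totRel C v u)) ∧ s(u,v) ∉ F := by
  simp [totGraph, SimpleGraph.deleteEdges_adj, SimpleGraph.fromRel_adj]

lemma tdn_le_card {V : Type*} {G : SimpleGraph V} {D : Finset V}
    (h : IsTotalDomSet G D) : totalDomNum G ≤ D.card :=
  Nat.sInf_le ⟨D, h, rfl⟩

lemma le_tdn {V : Type*} {G : SimpleGraph V} {k : ℕ}
    (hne : ∃ D : Finset V, IsTotalDomSet G D)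
    (h : ∀ D : Finset V, IsTotalDomSet G D → k ≤ D.card) :
    k ≤ totalDomNum G := by
  obtain ⟨D0, hD0⟩ := hne
  have hmem := Nat.sInf_mem (s := {k | ∃ D : Finset V, IsTotalDomSet G D ∧ D.card = k})
    ⟨D0.card, D0, hD0, rfl⟩
  obtain ⟨D, hD, hcard⟩ := hmem
  exact le_trans (h D hD) (le_of_eq hcard)

lemma tdn_zero {V : Type*} {G : SimpleGraph V} (v : V)
    (h : ∀ u, ¬ G.Adj u v) : totalDomNum G = 0 := by
  rw [totalDomNum, Nat.sInf_eq_zero]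
  right
  ext k
  simp only [Set.mem_setOf_eq, Set.mem_empty_iff_false, iff_false]
  rintro ⟨D, hD, -⟩
  obtain ⟨u, -, hadj⟩ := hD v
  exact h u hadj


/-- candidate dominating set: all `vᵢ`, one literal per variable, and three extra vertices -/
def stdD (ℓ : Fin n → Bool) (t : Fin 3 → TVert n m) : Finset (TVert n m) :=
  (Finset.univ.image fun i : Fin n => (tvv i : TVert n m)) ∪
    (Finset.univ.image fun i : Fin n => (tlit i (ℓ i) : TVert n m)) ∪
    Finset.univ.image t

lemma stdD_card (ℓ : Fin n → Bool) (t : Fin 3 → TVert n m) :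
    (stdD ℓ t).card ≤ 2 * n + 3 := by
  refine le_trans (Finset.card_union_le _ _) ?_
  have h1 := Finset.card_union_le
    (Finset.univ.image fun i : Fin n => (tvv i : TVert n m))
    (Finset.univ.image fun i : Fin n => (tlit i (ℓ i) : TVert n m))
  have h2 := Finset.card_image_le (s := (Finset.univ : Finset (Fin n)))
    (f := fun i : Fin n => (tvv i : TVert n m))
  have h3 := Finset.card_image_le (s := (Finset.univ : Finset (Fin n)))
    (f := fun i : Fin n => (tlit i (ℓ i) : TVert n m))
  have h4 := Finset.card_image_le (s := (Finset.univ : Finset (Fin 3))) (f := t)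
  simp only [Finset.card_univ, Fintype.card_fin] at h2 h3 h4
  omega

lemma tvv_mem (ℓ : Fin n → Bool) (t : Fin 3 → TVert n m) (i : Fin n) :
    (tvv i : TVert n m) ∈ stdD ℓ t := by
  simp [stdD]

lemma tlit_mem (ℓ : Fin n → Bool) (t : Fin 3 → TVert n m) (i : Fin n) :
    (tlit i (ℓ i) : TVert n m) ∈ stdD ℓ t := by
  simp [stdD]

lemma t_mem (ℓ : Fin n → Bool) (t : Fin 3 → TVert n m) (k : Fin 3) :
    t k ∈ stdD ℓ t := by
  simp [stdD]

lemma stdD_tds (F : Set (Sym2 (TVert n m))) (ℓ : Fin n → Bool) (t : Fin 3 → TVert n m)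
    (h1 : ∀ i, s((tvv i : TVert n m), tlit i (ℓ i)) ∉ F)
    (h2 : ∀ i, s((tvv i : TVert n m), tvv' i) ∉ F)
    (h3 : ∀ i, s((tvv i : TVert n m), tlit i (!ℓ i)) ∉ F ∨
      s((tlit i (ℓ i) : TVert n m), tlit i (!ℓ i)) ∉ F)
    (hrest : ∀ v : Fin m ⊕ Fin 5, ∃ u ∈ stdD ℓ t,
      ((totGraph C).deleteEdges F).Adj u (Sum.inr (Sum.inr v))) :
    IsTotalDomSet ((totGraph C).deleteEdges F) (stdD ℓ t) := by
  rintro (⟨i, b⟩ | ⟨⟨i, b⟩ | v⟩)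
  · -- literal vertex
    by_cases hb : b = ℓ i
    · subst hb
      refine ⟨tvv i, tvv_mem ℓ t i, ?_⟩
      rw [adj_iff]
      refine ⟨⟨by simp [tvv, tlit], Or.inr ⟨rfl, rfl⟩⟩, h1 i⟩
    · have hb' : b = !ℓ i := by cases b <;> cases h : ℓ i <;> simp_all
      subst hb'
      rcases h3 i with h | h
      · refine ⟨tvv i, tvv_mem ℓ t i, ?_⟩
        rw [adj_iff]
        exact ⟨⟨by simp [tvv, tlit], Or.inr ⟨rfl, rfl⟩⟩, h⟩
      · refine ⟨tlit i (ℓ i), tlit_mem ℓ t i, ?_⟩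
        rw [adj_iff]
        refine ⟨⟨by simp [tlit], Or.inl ⟨rfl, by simp⟩⟩, h⟩
  · -- tvv / tvv'
    cases b
    · refine ⟨tlit i (ℓ i), tlit_mem ℓ t i, ?_⟩
      rw [adj_iff]
      have := h1 i
      rw [Sym2.eq_swap] at this
      exact ⟨⟨by simp [tvv, tlit], Or.inl ⟨rfl, rfl⟩⟩, this⟩
    · refine ⟨tvv i, tvv_mem ℓ t i, ?_⟩
      rw [adj_iff]
      exact ⟨⟨by simp [tvv, tvv'], Or.inl rfl⟩, h2 i⟩
  · exact hrest v

lemma tds_s24 :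
    IsTotalDomSet ((totGraph C).deleteEdges {s((tsv 1 : TVert n m), tsv 3)})
      (stdD (fun _ => true) ![tsv 0, tsv 1, tsv 3]) := by
  apply stdD_tds
  · intro i
    simp [tvv, tlit, tsv, Sym2.eq_iff]
  · intro i
    simp [tvv, tvv', tsv, Sym2.eq_iff]
  · intro i
    left
    simp [tvv, tlit, tsv, Sym2.eq_iff]
  · rintro (j | k)
    · -- clause vertex, dominated by s₁ = tsv 0 = t 0
      refine ⟨tsv 0, t_mem _ _ 0, ?_⟩
      rw [adj_iff]
      refine ⟨⟨by simp [tsv, tcv], Or.inl (Or.inl rfl)⟩, ?_⟩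
      simp [tsv, tcv, Sym2.eq_iff]
    · fin_cases k
      · -- s₁ dominated by s₂
        refine ⟨tsv 1, t_mem _ _ 1, ?_⟩
        rw [adj_iff]
        exact ⟨⟨by simp [tsv], Or.inr (Or.inl ⟨rfl, rfl⟩)⟩, by simp [tsv, Sym2.eq_iff]⟩
      · -- s₂ dominated by s₁
        refine ⟨tsv 0, t_mem _ _ 0, ?_⟩
        rw [adj_iff]
        exact ⟨⟨by simp [tsv], Or.inl (Or.inl ⟨rfl, rfl⟩)⟩, by simp [tsv, Sym2.eq_iff]⟩
      · -- s₃ dominated by s₂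
        refine ⟨tsv 1, t_mem _ _ 1, ?_⟩
        rw [adj_iff]
        exact ⟨⟨by simp [tsv], Or.inl (Or.inr (Or.inr (Or.inl ⟨rfl, rfl⟩)))⟩, by simp [tsv, Sym2.eq_iff]⟩
      · -- s₄ dominated by s₁
        refine ⟨tsv 0, t_mem _ _ 0, ?_⟩
        rw [adj_iff]
        exact ⟨⟨by simp [tsv], Or.inl (Or.inr (Or.inl ⟨rfl, rfl⟩))⟩, by simp [tsv, Sym2.eq_iff]⟩
      · -- s₅ dominated by s₄
        refine ⟨tsv 3, t_mem _ _ 2, ?_⟩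
        rw [adj_iff]
        exact ⟨⟨by simp [tsv], Or.inl (Or.inr (Or.inr (Or.inr (Or.inr ⟨rfl, rfl⟩))))⟩, by simp [tsv, Sym2.eq_iff]⟩

section configs
variable (C)

/-- configuration `ℓ ≡ true`, `t = (s₁,s₂,s₄)`: works whenever the deleted edge
`e` is different from all of: `vᵢuᵢ`, `vᵢūᵢ`, `vᵢvᵢ'`, `s₁s₂`, `s₁s₄`, `s₂s₃`,
`s₂s₄`(not used? used!), `s₄s₅`, `s₁cⱼ`. We instantiate it only at suitable `e`. -/
lemma tds_litlit (i0 : Fin n) (b0 b1 : Bool) :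
    IsTotalDomSet ((totGraph C).deleteEdges {s((Sum.inl (i0, b0) : TVert n m), Sum.inl (i0, b1))})
      (stdD (fun _ => true) ![tsv 0, tsv 1, tsv 3]) := by
  apply stdD_tds
  · intro i; simp [tvv, tlit, Sym2.eq_iff]
  · intro i; simp [tvv, tvv', Sym2.eq_iff]
  · intro i; left; simp [tvv, tlit, Sym2.eq_iff]
  · rintro (j | k)
    · exact ⟨tsv 0, t_mem _ _ 0, by
        rw [adj_iff]
        exact ⟨⟨by simp [tsv, tcv], Or.inl (Or.inl rfl)⟩, by simp [tsv, tcv, Sym2.eq_iff]⟩⟩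
    · fin_cases k
      · exact ⟨tsv 1, t_mem _ _ 1, by
          rw [adj_iff]
          exact ⟨⟨by simp [tsv], Or.inr (Or.inl ⟨rfl, rfl⟩)⟩, by simp [tsv, Sym2.eq_iff]⟩⟩
      · exact ⟨tsv 0, t_mem _ _ 0, by
          rw [adj_iff]
          exact ⟨⟨by simp [tsv], Or.inl (Or.inl ⟨rfl, rfl⟩)⟩, by simp [tsv, Sym2.eq_iff]⟩⟩
      · exact ⟨tsv 1, t_mem _ _ 1, by
          rw [adj_iff]
          exact ⟨⟨by simp [tsv], Or.inl (Or.inr (Or.inr (Or.inl ⟨rfl, rfl⟩)))⟩, by simp [tsv, Sym2.eq_iff]⟩⟩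
      · exact ⟨tsv 0, t_mem _ _ 0, by
          rw [adj_iff]
          exact ⟨⟨by simp [tsv], Or.inl (Or.inr (Or.inl ⟨rfl, rfl⟩))⟩, by simp [tsv, Sym2.eq_iff]⟩⟩
      · exact ⟨tsv 3, t_mem _ _ 2, by
          rw [adj_iff]
          exact ⟨⟨by simp [tsv], Or.inl (Or.inr (Or.inr (Or.inr (Or.inr ⟨rfl, rfl⟩))))⟩, by simp [tsv, Sym2.eq_iff]⟩⟩

lemma tds_litvv (i0 : Fin n) (b0 : Bool) :
    IsTotalDomSet ((totGraph C).deleteEdges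
        {s((Sum.inl (i0, b0) : TVert n m), Sum.inr (Sum.inl (i0, false)))})
      (stdD (fun j => if j = i0 then !b0 else true) ![tsv 0, tsv 1, tsv 3]) := by
  apply stdD_tds
  · intro i
    rcases eq_or_ne i i0 with rfl | hne
    · simp [tvv, tlit, Sym2.eq_iff]
    · simp [tvv, tlit, Sym2.eq_iff, hne]
  · intro i; simp [tvv, tvv', Sym2.eq_iff]
  · intro i
    rcases eq_or_ne i i0 with rfl | hne
    · right; simp [tlit, Sym2.eq_iff]
    · left; simp [tvv, tlit, Sym2.eq_iff, hne]
  · rintro (j | k)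
    · exact ⟨tsv 0, t_mem _ _ 0, by
        rw [adj_iff]
        exact ⟨⟨by simp [tsv, tcv], Or.inl (Or.inl rfl)⟩, by simp [tsv, tcv, Sym2.eq_iff]⟩⟩
    · fin_cases k
      · exact ⟨tsv 1, t_mem _ _ 1, by
          rw [adj_iff]
          exact ⟨⟨by simp [tsv], Or.inr (Or.inl ⟨rfl, rfl⟩)⟩, by simp [tsv, Sym2.eq_iff]⟩⟩
      · exact ⟨tsv 0, t_mem _ _ 0, by
          rw [adj_iff]
          exact ⟨⟨by simp [tsv], Or.inl (Or.inl ⟨rfl, rfl⟩)⟩, by simp [tsv, Sym2.eq_iff]⟩⟩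
      · exact ⟨tsv 1, t_mem _ _ 1, by
          rw [adj_iff]
          exact ⟨⟨by simp [tsv], Or.inl (Or.inr (Or.inr (Or.inl ⟨rfl, rfl⟩)))⟩, by simp [tsv, Sym2.eq_iff]⟩⟩
      · exact ⟨tsv 0, t_mem _ _ 0, by
          rw [adj_iff]
          exact ⟨⟨by simp [tsv], Or.inl (Or.inr (Or.inl ⟨rfl, rfl⟩))⟩, by simp [tsv, Sym2.eq_iff]⟩⟩
      · exact ⟨tsv 3, t_mem _ _ 2, by
          rw [adj_iff]
          exact ⟨⟨by simp [tsv], Or.inl (Or.inr (Or.inr (Or.inr (Or.inr ⟨rfl, rfl⟩))))⟩, by simp [tsv, Sym2.eq_iff]⟩⟩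

end configs

section configs2
variable (C)

lemma tds_litclause (l : Lit n) (j0 : Fin m) :
    IsTotalDomSet ((totGraph C).deleteEdges {s((Sum.inl l : TVert n m), Sum.inr (Sum.inr (Sum.inl j0)))})
      (stdD (fun _ => true) ![tsv 0, tsv 1, tsv 3]) := by
  apply stdD_tds
  · intro i; simp [tvv, tlit, tsv, tcv, Sym2.eq_iff]
  · intro i; simp [tvv, tvv', tsv, tcv, Sym2.eq_iff]
  · intro i; left; simp [tvv, tlit, tsv, tcv, Sym2.eq_iff]
  · rintro (j | k)
    · exact ⟨tsv 0, t_mem _ _ 0, by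
        rw [adj_iff]
        exact ⟨⟨by simp [tsv, tcv], Or.inl (Or.inl rfl)⟩, by simp [tsv, tcv, tlit, Sym2.eq_iff]⟩⟩
    · fin_cases k
      · exact ⟨tsv 1, t_mem _ _ 1, by
          rw [adj_iff]
          exact ⟨⟨by simp [tsv, tcv], Or.inr (Or.inl ⟨rfl, rfl⟩)⟩, by simp [tsv, tcv, tlit, Sym2.eq_iff]⟩⟩
      · exact ⟨tsv 0, t_mem _ _ 0, by
          rw [adj_iff]
          exact ⟨⟨by simp [tsv, tcv], Or.inl (Or.inl ⟨rfl, rfl⟩)⟩, by simp [tsv, tcv, tlit, Sym2.eq_iff]⟩⟩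
      · exact ⟨tsv 1, t_mem _ _ 1, by
          rw [adj_iff]
          exact ⟨⟨by simp [tsv, tcv], Or.inl (Or.inr (Or.inr (Or.inl ⟨rfl, rfl⟩)))⟩, by simp [tsv, tcv, tlit, Sym2.eq_iff]⟩⟩
      · exact ⟨tsv 0, t_mem _ _ 0, by
          rw [adj_iff]
          exact ⟨⟨by simp [tsv, tcv], Or.inl (Or.inr (Or.inl ⟨rfl, rfl⟩))⟩, by simp [tsv, tcv, tlit, Sym2.eq_iff]⟩⟩
      · exact ⟨tsv 3, t_mem _ _ 2, by
          rw [adj_iff]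
          exact ⟨⟨by simp [tsv, tcv], Or.inl (Or.inr (Or.inr (Or.inr (Or.inr ⟨rfl, rfl⟩))))⟩, by simp [tsv, tcv, tlit, Sym2.eq_iff]⟩⟩

lemma tds_s3clause (j0 : Fin m) :
    IsTotalDomSet ((totGraph C).deleteEdges {s((tsv 2 : TVert n m), tcv j0)})
      (stdD (fun _ => true) ![tsv 0, tsv 1, tsv 3]) := by
  apply stdD_tds
  · intro i; simp [tvv, tlit, tsv, tcv, Sym2.eq_iff]
  · intro i; simp [tvv, tvv', tsv, tcv, Sym2.eq_iff]
  · intro i; left; simp [tvv, tlit, tsv, tcv, Sym2.eq_iff]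
  · rintro (j | k)
    · exact ⟨tsv 0, t_mem _ _ 0, by
        rw [adj_iff]
        exact ⟨⟨by simp [tsv, tcv], Or.inl (Or.inl rfl)⟩, by simp [tsv, tcv, tlit, Sym2.eq_iff]⟩⟩
    · fin_cases k
      · exact ⟨tsv 1, t_mem _ _ 1, by
          rw [adj_iff]
          exact ⟨⟨by simp [tsv, tcv], Or.inr (Or.inl ⟨rfl, rfl⟩)⟩, by simp [tsv, tcv, tlit, Sym2.eq_iff]⟩⟩
      · exact ⟨tsv 0, t_mem _ _ 0, by
          rw [adj_iff]
          exact ⟨⟨by simp [tsv, tcv], Or.inl (Or.inl ⟨rfl, rfl⟩)⟩, by simp [tsv, tcv, tlit, Sym2.eq_iff]⟩⟩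
      · exact ⟨tsv 1, t_mem _ _ 1, by
          rw [adj_iff]
          exact ⟨⟨by simp [tsv, tcv], Or.inl (Or.inr (Or.inr (Or.inl ⟨rfl, rfl⟩)))⟩, by simp [tsv, tcv, tlit, Sym2.eq_iff]⟩⟩
      · exact ⟨tsv 0, t_mem _ _ 0, by
          rw [adj_iff]
          exact ⟨⟨by simp [tsv, tcv], Or.inl (Or.inr (Or.inl ⟨rfl, rfl⟩))⟩, by simp [tsv, tcv, tlit, Sym2.eq_iff]⟩⟩
      · exact ⟨tsv 3, t_mem _ _ 2, by
          rw [adj_iff]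
          exact ⟨⟨by simp [tsv, tcv], Or.inl (Or.inr (Or.inr (Or.inr (Or.inr ⟨rfl, rfl⟩))))⟩, by simp [tsv, tcv, tlit, Sym2.eq_iff]⟩⟩

lemma tds_empty  :
    IsTotalDomSet ((totGraph C).deleteEdges (∅ : Set (Sym2 (TVert n m))))
      (stdD (fun _ => true) ![tsv 0, tsv 1, tsv 3]) := by
  apply stdD_tds
  · intro i; simp [tvv, tlit, tsv, tcv, Sym2.eq_iff]
  · intro i; simp [tvv, tvv', tsv, tcv, Sym2.eq_iff]
  · intro i; left; simp [tvv, tlit, tsv, tcv, Sym2.eq_iff]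
  · rintro (j | k)
    · exact ⟨tsv 0, t_mem _ _ 0, by
        rw [adj_iff]
        exact ⟨⟨by simp [tsv, tcv], Or.inl (Or.inl rfl)⟩, by simp [tsv, tcv, tlit, Sym2.eq_iff]⟩⟩
    · fin_cases k
      · exact ⟨tsv 1, t_mem _ _ 1, by
          rw [adj_iff]
          exact ⟨⟨by simp [tsv, tcv], Or.inr (Or.inl ⟨rfl, rfl⟩)⟩, by simp [tsv, tcv, tlit, Sym2.eq_iff]⟩⟩
      · exact ⟨tsv 0, t_mem _ _ 0, by
          rw [adj_iff]
          exact ⟨⟨by simp [tsv, tcv], Or.inl (Or.inl ⟨rfl, rfl⟩)⟩, by simp [tsv, tcv, tlit, Sym2.eq_iff]⟩⟩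
      · exact ⟨tsv 1, t_mem _ _ 1, by
          rw [adj_iff]
          exact ⟨⟨by simp [tsv, tcv], Or.inl (Or.inr (Or.inr (Or.inl ⟨rfl, rfl⟩)))⟩, by simp [tsv, tcv, tlit, Sym2.eq_iff]⟩⟩
      · exact ⟨tsv 0, t_mem _ _ 0, by
          rw [adj_iff]
          exact ⟨⟨by simp [tsv, tcv], Or.inl (Or.inr (Or.inl ⟨rfl, rfl⟩))⟩, by simp [tsv, tcv, tlit, Sym2.eq_iff]⟩⟩
      · exact ⟨tsv 3, t_mem _ _ 2, by
          rw [adj_iff]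
          exact ⟨⟨by simp [tsv, tcv], Or.inl (Or.inr (Or.inr (Or.inr (Or.inr ⟨rfl, rfl⟩))))⟩, by simp [tsv, tcv, tlit, Sym2.eq_iff]⟩⟩

lemma tds_s12  :
    IsTotalDomSet ((totGraph C).deleteEdges {s((tsv 0 : TVert n m), tsv 1)})
      (stdD (fun _ => true) ![tsv 1, tsv 2, tsv 3]) := by
  apply stdD_tds
  · intro i; simp [tvv, tlit, tsv, tcv, Sym2.eq_iff]
  · intro i; simp [tvv, tvv', tsv, tcv, Sym2.eq_iff]
  · intro i; left; simp [tvv, tlit, tsv, tcv, Sym2.eq_iff]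
  · rintro (j | k)
    · exact ⟨tsv 2, t_mem _ _ 1, by
        rw [adj_iff]
        exact ⟨⟨by simp [tsv, tcv], Or.inl (Or.inr rfl)⟩, by simp [tsv, tcv, tlit, Sym2.eq_iff]⟩⟩
    · fin_cases k
      · exact ⟨tsv 3, t_mem _ _ 2, by
          rw [adj_iff]
          exact ⟨⟨by simp [tsv, tcv], Or.inr (Or.inr (Or.inl ⟨rfl, rfl⟩))⟩, by simp [tsv, tcv, tlit, Sym2.eq_iff]⟩⟩
      · exact ⟨tsv 3, t_mem _ _ 2, by
          rw [adj_iff]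
          exact ⟨⟨by simp [tsv, tcv], Or.inr (Or.inr (Or.inr (Or.inr (Or.inl ⟨rfl, rfl⟩))))⟩, by simp [tsv, tcv, tlit, Sym2.eq_iff]⟩⟩
      · exact ⟨tsv 1, t_mem _ _ 0, by
          rw [adj_iff]
          exact ⟨⟨by simp [tsv, tcv], Or.inl (Or.inr (Or.inr (Or.inl ⟨rfl, rfl⟩)))⟩, by simp [tsv, tcv, tlit, Sym2.eq_iff]⟩⟩
      · exact ⟨tsv 1, t_mem _ _ 0, by
          rw [adj_iff]
          exact ⟨⟨by simp [tsv, tcv], Or.inl (Or.inr (Or.inr (Or.inr (Or.inl ⟨rfl, rfl⟩))))⟩, by simp [tsv, tcv, tlit, Sym2.eq_iff]⟩⟩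
      · exact ⟨tsv 3, t_mem _ _ 2, by
          rw [adj_iff]
          exact ⟨⟨by simp [tsv, tcv], Or.inl (Or.inr (Or.inr (Or.inr (Or.inr ⟨rfl, rfl⟩))))⟩, by simp [tsv, tcv, tlit, Sym2.eq_iff]⟩⟩

lemma tds_s1clause (j0 : Fin m) :
    IsTotalDomSet ((totGraph C).deleteEdges {s((tsv 0 : TVert n m), tcv j0)})
      (stdD (fun _ => true) ![tsv 1, tsv 2, tsv 3]) := by
  apply stdD_tds
  · intro i; simp [tvv, tlit, tsv, tcv, Sym2.eq_iff]
  · intro i; simp [tvv, tvv', tsv, tcv, Sym2.eq_iff]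
  · intro i; left; simp [tvv, tlit, tsv, tcv, Sym2.eq_iff]
  · rintro (j | k)
    · exact ⟨tsv 2, t_mem _ _ 1, by
        rw [adj_iff]
        exact ⟨⟨by simp [tsv, tcv], Or.inl (Or.inr rfl)⟩, by simp [tsv, tcv, tlit, Sym2.eq_iff]⟩⟩
    · fin_cases k
      · exact ⟨tsv 3, t_mem _ _ 2, by
          rw [adj_iff]
          exact ⟨⟨by simp [tsv, tcv], Or.inr (Or.inr (Or.inl ⟨rfl, rfl⟩))⟩, by simp [tsv, tcv, tlit, Sym2.eq_iff]⟩⟩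
      · exact ⟨tsv 3, t_mem _ _ 2, by
          rw [adj_iff]
          exact ⟨⟨by simp [tsv, tcv], Or.inr (Or.inr (Or.inr (Or.inr (Or.inl ⟨rfl, rfl⟩))))⟩, by simp [tsv, tcv, tlit, Sym2.eq_iff]⟩⟩
      · exact ⟨tsv 1, t_mem _ _ 0, by
          rw [adj_iff]
          exact ⟨⟨by simp [tsv, tcv], Or.inl (Or.inr (Or.inr (Or.inl ⟨rfl, rfl⟩)))⟩, by simp [tsv, tcv, tlit, Sym2.eq_iff]⟩⟩
      · exact ⟨tsv 1, t_mem _ _ 0, by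
          rw [adj_iff]
          exact ⟨⟨by simp [tsv, tcv], Or.inl (Or.inr (Or.inr (Or.inr (Or.inl ⟨rfl, rfl⟩))))⟩, by simp [tsv, tcv, tlit, Sym2.eq_iff]⟩⟩
      · exact ⟨tsv 3, t_mem _ _ 2, by
          rw [adj_iff]
          exact ⟨⟨by simp [tsv, tcv], Or.inl (Or.inr (Or.inr (Or.inr (Or.inr ⟨rfl, rfl⟩))))⟩, by simp [tsv, tcv, tlit, Sym2.eq_iff]⟩⟩

lemma tds_s14  :
    IsTotalDomSet ((totGraph C).deleteEdges {s((tsv 0 : TVert n m), tsv 3)})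
      (stdD (fun _ => true) ![tsv 0, tsv 1, tsv 3]) := by
  apply stdD_tds
  · intro i; simp [tvv, tlit, tsv, tcv, Sym2.eq_iff]
  · intro i; simp [tvv, tvv', tsv, tcv, Sym2.eq_iff]
  · intro i; left; simp [tvv, tlit, tsv, tcv, Sym2.eq_iff]
  · rintro (j | k)
    · exact ⟨tsv 0, t_mem _ _ 0, by
        rw [adj_iff]
        exact ⟨⟨by simp [tsv, tcv], Or.inl (Or.inl rfl)⟩, by simp [tsv, tcv, tlit, Sym2.eq_iff]⟩⟩
    · fin_cases k
      · exact ⟨tsv 1, t_mem _ _ 1, by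
          rw [adj_iff]
          exact ⟨⟨by simp [tsv, tcv], Or.inr (Or.inl ⟨rfl, rfl⟩)⟩, by simp [tsv, tcv, tlit, Sym2.eq_iff]⟩⟩
      · exact ⟨tsv 0, t_mem _ _ 0, by
          rw [adj_iff]
          exact ⟨⟨by simp [tsv, tcv], Or.inl (Or.inl ⟨rfl, rfl⟩)⟩, by simp [tsv, tcv, tlit, Sym2.eq_iff]⟩⟩
      · exact ⟨tsv 1, t_mem _ _ 1, by
          rw [adj_iff]
          exact ⟨⟨by simp [tsv, tcv], Or.inl (Or.inr (Or.inr (Or.inl ⟨rfl, rfl⟩)))⟩, by simp [tsv, tcv, tlit, Sym2.eq_iff]⟩⟩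
      · exact ⟨tsv 1, t_mem _ _ 1, by
          rw [adj_iff]
          exact ⟨⟨by simp [tsv, tcv], Or.inl (Or.inr (Or.inr (Or.inr (Or.inl ⟨rfl, rfl⟩))))⟩, by simp [tsv, tcv, tlit, Sym2.eq_iff]⟩⟩
      · exact ⟨tsv 3, t_mem _ _ 2, by
          rw [adj_iff]
          exact ⟨⟨by simp [tsv, tcv], Or.inl (Or.inr (Or.inr (Or.inr (Or.inr ⟨rfl, rfl⟩))))⟩, by simp [tsv, tcv, tlit, Sym2.eq_iff]⟩⟩

lemma tds_s23 (j0 : Fin m) :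
    IsTotalDomSet ((totGraph C).deleteEdges {s((tsv 1 : TVert n m), tsv 2)})
      (stdD (fun _ => true) ![tsv 0, tsv 3, tcv j0]) := by
  apply stdD_tds
  · intro i; simp [tvv, tlit, tsv, tcv, Sym2.eq_iff]
  · intro i; simp [tvv, tvv', tsv, tcv, Sym2.eq_iff]
  · intro i; left; simp [tvv, tlit, tsv, tcv, Sym2.eq_iff]
  · rintro (j | k)
    · exact ⟨tsv 0, t_mem _ _ 0, by
        rw [adj_iff]
        exact ⟨⟨by simp [tsv, tcv], Or.inl (Or.inl rfl)⟩, by simp [tsv, tcv, tlit, Sym2.eq_iff]⟩⟩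
    · fin_cases k
      · exact ⟨tsv 3, t_mem _ _ 1, by
          rw [adj_iff]
          exact ⟨⟨by simp [tsv, tcv], Or.inr (Or.inr (Or.inl ⟨rfl, rfl⟩))⟩, by simp [tsv, tcv, tlit, Sym2.eq_iff]⟩⟩
      · exact ⟨tsv 0, t_mem _ _ 0, by
          rw [adj_iff]
          exact ⟨⟨by simp [tsv, tcv], Or.inl (Or.inl ⟨rfl, rfl⟩)⟩, by simp [tsv, tcv, tlit, Sym2.eq_iff]⟩⟩
      · exact ⟨tcv j0, t_mem _ _ 2, by
          rw [adj_iff]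
          exact ⟨⟨by simp [tsv, tcv], Or.inr (Or.inr rfl)⟩, by simp [tsv, tcv, tlit, Sym2.eq_iff]⟩⟩
      · exact ⟨tsv 0, t_mem _ _ 0, by
          rw [adj_iff]
          exact ⟨⟨by simp [tsv, tcv], Or.inl (Or.inr (Or.inl ⟨rfl, rfl⟩))⟩, by simp [tsv, tcv, tlit, Sym2.eq_iff]⟩⟩
      · exact ⟨tsv 3, t_mem _ _ 1, by
          rw [adj_iff]
          exact ⟨⟨by simp [tsv, tcv], Or.inl (Or.inr (Or.inr (Or.inr (Or.inr ⟨rfl, rfl⟩))))⟩, by simp [tsv, tcv, tlit, Sym2.eq_iff]⟩⟩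


end configs2

section isolated
variable (C)

lemma tdn_vv'_zero (i : Fin n) :
    totalDomNum ((totGraph C).deleteEdges {s((tvv i : TVert n m), tvv' i)}) = 0 := by
  apply tdn_zero (tvv' i)
  intro u
  rw [adj_iff]
  rintro ⟨⟨hne, h | h⟩, hF⟩
  · rcases u with ⟨i', (_|_)⟩ | ⟨⟨i', (_|_)⟩ | j | p⟩
    · exact absurd h.2 (by simp)
    · exact absurd h.2 (by simp)
    · have h' : i' = i := h
      subst h'
      exact hF rfl
    · exact h.elim
    · exact h.elim
    · exact h.elim
  · rcases u with ⟨i', (_|_)⟩ | ⟨⟨i', (_|_)⟩ | j | p⟩ <;> exact h.elim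

lemma tdn_s45_zero :
    totalDomNum ((totGraph C).deleteEdges {s((tsv 3 : TVert n m), tsv 4)}) = 0 := by
  apply tdn_zero (tsv 4)
  intro u
  rw [adj_iff]
  rintro ⟨⟨hne, h | h⟩, hF⟩
  · rcases u with ⟨i', b⟩ | ⟨⟨i', b⟩ | j | p⟩
    · exact h.elim
    · cases b <;> exact h.elim
    · exact h.elim
    · rcases h with h | h | h | h | h
      · exact absurd h.2 (by decide)
      · exact absurd h.2 (by decide)
      · exact absurd h.2 (by decide)
      · exact absurd h.2 (by decide)
      · obtain ⟨h1, -⟩ := h; subst h1; exact hF rfl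
  · rcases u with ⟨i', b⟩ | ⟨⟨i', b⟩ | j | p⟩
    · exact h.elim
    · cases b <;> exact h.elim
    · rcases h with h | h <;> exact absurd h (by decide)
    · rcases h with h | h | h | h | h <;> exact absurd h.1 (by decide)

lemma tdn_s23_zero (hm : m = 0) :
    totalDomNum ((totGraph C).deleteEdges {s((tsv 1 : TVert n m), tsv 2)}) = 0 := by
  apply tdn_zero (tsv 2)
  intro u
  rw [adj_iff]
  rintro ⟨⟨hne, h | h⟩, hF⟩
  · rcases u with ⟨i', b⟩ | ⟨⟨i', b⟩ | j | p⟩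
    · exact h.elim
    · cases b <;> exact h.elim
    · exact h.elim
    · rcases h with h | h | h | h | h
      · exact absurd h.2 (by decide)
      · exact absurd h.2 (by decide)
      · obtain ⟨h1, -⟩ := h; subst h1; exact hF rfl
      · exact absurd h.2 (by decide)
      · exact absurd h.2 (by decide)
  · rcases u with ⟨i', b⟩ | ⟨⟨i', b⟩ | j | p⟩
    · exact h.elim
    · cases b <;> exact h.elim
    · exact (Fin.cast hm j).elim0
    · rcases h with h | h | h | h | h <;> exact absurd h.1 (by decide)

end isolated

section lower
variable {F : Set (Sym2 (TVert n m))}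

lemma adj_to_vv' {u : TVert n m} {i : Fin n}
    (h : ((totGraph C).deleteEdges F).Adj u (tvv' i)) : u = tvv i := by
  obtain ⟨⟨-, h | h⟩, -⟩ := adj_iff.mp h
  · rcases u with ⟨i', b⟩ | ⟨⟨i', (_|_)⟩ | j | p⟩
    · exact absurd h.2 (by simp)
    · have h' : i' = i := h
      subst h'; rfl
    · exact h.elim
    · exact h.elim
    · exact h.elim
  · rcases u with ⟨i', b⟩ | ⟨⟨i', (_|_)⟩ | j | p⟩ <;> exact h.elim

lemma adj_to_vv {u : TVert n m} {i : Fin n}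
    (h : ((totGraph C).deleteEdges F).Adj u (tvv i)) :
    u = tlit i true ∨ u = tlit i false ∨ u = tvv' i := by
  obtain ⟨⟨-, h | h⟩, -⟩ := adj_iff.mp h
  · rcases u with ⟨i', b⟩ | ⟨⟨i', (_|_)⟩ | j | p⟩
    · obtain ⟨h1, -⟩ := h
      subst h1
      cases b
      · exact Or.inr (Or.inl rfl)
      · exact Or.inl rfl
    · exact h.elim
    · exact h.elim
    · exact h.elim
    · exact h.elim
  · rcases u with ⟨i', b⟩ | ⟨⟨i', (_|_)⟩ | j | p⟩
    · exact h.elim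
    · exact h.elim
    · have h' : i = i' := h
      subst h'
      exact Or.inr (Or.inr rfl)
    · exact h.elim
    · exact h.elim

lemma adj_to_s5 {u : TVert n m}
    (h : ((totGraph C).deleteEdges F).Adj u (tsv 4)) : u = tsv 3 := by
  obtain ⟨⟨-, h | h⟩, -⟩ := adj_iff.mp h
  · rcases u with ⟨i', b⟩ | ⟨⟨i', b⟩ | j | p⟩
    · exact h.elim
    · cases b <;> exact h.elim
    · exact h.elim
    · rcases h with h | h | h | h | h
      · exact absurd h.2 (by decide)
      · exact absurd h.2 (by decide)
      · exact absurd h.2 (by decide)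
      · exact absurd h.2 (by decide)
      · obtain ⟨h1, -⟩ := h; subst h1; rfl
  · rcases u with ⟨i', b⟩ | ⟨⟨i', b⟩ | j | p⟩
    · exact h.elim
    · cases b <;> exact h.elim
    · rcases h with h | h <;> exact absurd h (by decide)
    · rcases h with h | h | h | h | h <;> exact absurd h.1 (by decide)

lemma adj_to_s4 {u : TVert n m}
    (h : ((totGraph C).deleteEdges F).Adj u (tsv 3)) :
    u = tsv 0 ∨ u = tsv 1 ∨ u = tsv 4 := by
  obtain ⟨⟨-, h | h⟩, -⟩ := adj_iff.mp h
  · rcases u with ⟨i', b⟩ | ⟨⟨i', b⟩ | j | p⟩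
    · exact h.elim
    · cases b <;> exact h.elim
    · exact h.elim
    · rcases h with h | h | h | h | h
      · exact absurd h.2 (by decide)
      · obtain ⟨h1, -⟩ := h; subst h1; exact Or.inl rfl
      · exact absurd h.2 (by decide)
      · obtain ⟨h1, -⟩ := h; subst h1; exact Or.inr (Or.inl rfl)
      · exact absurd h.2 (by decide)
  · rcases u with ⟨i', b⟩ | ⟨⟨i', b⟩ | j | p⟩
    · exact h.elim
    · cases b <;> exact h.elim
    · rcases h with h | h <;> exact absurd h (by decide)
    · rcases h with h | h | h | h | h
      · exact absurd h.1 (by decide)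
      · exact absurd h.1 (by decide)
      · exact absurd h.1 (by decide)
      · exact absurd h.1 (by decide)
      · obtain ⟨-, h2⟩ := h; subst h2; exact Or.inr (Or.inr rfl)

lemma adj_to_s3 {u : TVert n m}
    (h : ((totGraph C).deleteEdges F).Adj u (tsv 2)) :
    u = tsv 1 ∨ ∃ j, u = tcv j := by
  obtain ⟨⟨-, h | h⟩, -⟩ := adj_iff.mp h
  · rcases u with ⟨i', b⟩ | ⟨⟨i', b⟩ | j | p⟩
    · exact h.elim
    · cases b <;> exact h.elim
    · exact h.elim
    · rcases h with h | h | h | h | h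
      · exact absurd h.2 (by decide)
      · exact absurd h.2 (by decide)
      · obtain ⟨h1, -⟩ := h; subst h1; exact Or.inl rfl
      · exact absurd h.2 (by decide)
      · exact absurd h.2 (by decide)
  · rcases u with ⟨i', b⟩ | ⟨⟨i', b⟩ | j | p⟩
    · exact h.elim
    · cases b <;> exact h.elim
    · exact Or.inr ⟨j, rfl⟩
    · rcases h with h | h | h | h | h <;> exact absurd h.1 (by decide)

/-- the region of a vertex: gadget `i` or the `s`/clause region -/
def reg : TVert n m → Fin (n + 1)
  | Sum.inl (i, _) => i.castSucc
  | Sum.inr (Sum.inl (i, _)) => i.castSucc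
  | _ => Fin.last n

lemma card_lower {D : Finset (TVert n m)}
    (hD : IsTotalDomSet ((totGraph C).deleteEdges F) D) :
    2 * n + 2 ≤ D.card := by
  have hfib : D.card = ∑ r : Fin (n+1), (D.filter fun v => reg v = r).card :=
    Finset.card_eq_sum_card_fiberwise (fun x _ => Finset.mem_univ _)
  have hgad : ∀ i : Fin n, 2 ≤ (D.filter fun v => reg v = i.castSucc).card := by
    intro i
    obtain ⟨x, hxD, hx⟩ := hD (tvv' i)
    have hx' := adj_to_vv' hx
    subst hx'
    obtain ⟨y, hyD, hy⟩ := hD (tvv i)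
    have hy' := adj_to_vv hy
    have hsub : ({tvv i, y} : Finset (TVert n m)) ⊆ D.filter fun v => reg v = i.castSucc := by
      intro z hz
      rw [Finset.mem_insert, Finset.mem_singleton] at hz
      rcases hz with rfl | rfl
      · exact Finset.mem_filter.mpr ⟨hxD, rfl⟩
      · refine Finset.mem_filter.mpr ⟨hyD, ?_⟩
        rcases hy' with rfl | rfl | rfl <;> rfl
    have hne : (tvv i : TVert n m) ≠ y := by
      rcases hy' with rfl | rfl | rfl <;> simp [tvv, tlit, tvv']
    calc 2 = ({tvv i, y} : Finset (TVert n m)).card := (Finset.card_pair hne).symm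
      _ ≤ _ := Finset.card_le_card hsub
  have hlast : 2 ≤ (D.filter fun v => reg v = Fin.last n).card := by
    obtain ⟨x, hxD, hx⟩ := hD (tsv 4)
    have hx' := adj_to_s5 hx
    subst hx'
    obtain ⟨y, hyD, hy⟩ := hD (tsv 3)
    have hy' := adj_to_s4 hy
    have hsub : ({tsv 3, y} : Finset (TVert n m)) ⊆ D.filter fun v => reg v = Fin.last n := by
      intro z hz
      rw [Finset.mem_insert, Finset.mem_singleton] at hz
      rcases hz with rfl | rfl
      · exact Finset.mem_filter.mpr ⟨hxD, rfl⟩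
      · refine Finset.mem_filter.mpr ⟨hyD, ?_⟩
        rcases hy' with rfl | rfl | rfl <;> rfl
    have hne : (tsv 3 : TVert n m) ≠ y := by
      rcases hy' with rfl | rfl | rfl <;> simp [tsv]
    calc 2 = ({tsv 3, y} : Finset (TVert n m)).card := (Finset.card_pair hne).symm
      _ ≤ _ := Finset.card_le_card hsub
  rw [hfib, Fin.sum_univ_castSucc]
  have hsum : 2 * n ≤ ∑ i : Fin n, (D.filter fun v => reg v = i.castSucc).card := by
    calc 2 * n = ∑ _i : Fin n, 2 := by simp [Finset.sum_const, Finset.card_univ, mul_comm]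
      _ ≤ _ := Finset.sum_le_sum fun i _ => hgad i
  omega

lemma card_lower24 {D : Finset (TVert n m)}
    (hD : IsTotalDomSet ((totGraph C).deleteEdges {s((tsv 1 : TVert n m), tsv 3)}) D) :
    2 * n + 3 ≤ D.card := by
  have hfib : D.card = ∑ r : Fin (n+1), (D.filter fun v => reg v = r).card :=
    Finset.card_eq_sum_card_fiberwise (fun x _ => Finset.mem_univ _)
  have hgad : ∀ i : Fin n, 2 ≤ (D.filter fun v => reg v = i.castSucc).card := by
    intro i
    obtain ⟨x, hxD, hx⟩ := hD (tvv' i)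
    have hx' := adj_to_vv' hx
    subst hx'
    obtain ⟨y, hyD, hy⟩ := hD (tvv i)
    have hy' := adj_to_vv hy
    have hsub : ({tvv i, y} : Finset (TVert n m)) ⊆ D.filter fun v => reg v = i.castSucc := by
      intro z hz
      rw [Finset.mem_insert, Finset.mem_singleton] at hz
      rcases hz with rfl | rfl
      · exact Finset.mem_filter.mpr ⟨hxD, rfl⟩
      · refine Finset.mem_filter.mpr ⟨hyD, ?_⟩
        rcases hy' with rfl | rfl | rfl <;> rfl
    have hne : (tvv i : TVert n m) ≠ y := by
      rcases hy' with rfl | rfl | rfl <;> simp [tvv, tlit, tvv']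
    calc 2 = ({tvv i, y} : Finset (TVert n m)).card := (Finset.card_pair hne).symm
      _ ≤ _ := Finset.card_le_card hsub
  have hlast : 3 ≤ (D.filter fun v => reg v = Fin.last n).card := by
    obtain ⟨x, hxD, hx⟩ := hD (tsv 4)
    have hx' := adj_to_s5 hx
    subst hx'
    obtain ⟨y, hyD, hy⟩ := hD (tsv 3)
    have hyF := (adj_iff.mp hy).2
    have hy' : y = tsv 0 ∨ y = tsv 4 := by
      rcases adj_to_s4 hy with rfl | rfl | rfl
      · exact Or.inl rfl
      · exact absurd rfl hyF
      · exact Or.inr rfl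
    obtain ⟨z, hzD, hz⟩ := hD (tsv 2)
    have hz' := adj_to_s3 hz
    have hsub : ({tsv 3, y, z} : Finset (TVert n m)) ⊆ D.filter fun v => reg v = Fin.last n := by
      intro w hw
      rw [Finset.mem_insert, Finset.mem_insert, Finset.mem_singleton] at hw
      rcases hw with rfl | rfl | rfl
      · exact Finset.mem_filter.mpr ⟨hxD, rfl⟩
      · refine Finset.mem_filter.mpr ⟨hyD, ?_⟩
        rcases hy' with rfl | rfl <;> rfl
      · refine Finset.mem_filter.mpr ⟨hzD, ?_⟩
        rcases hz' with rfl | ⟨j, rfl⟩ <;> rfl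
    have hcard : ({tsv 3, y, z} : Finset (TVert n m)).card = 3 := by
      have h1 : (tsv 3 : TVert n m) ∉ ({y, z} : Finset (TVert n m)) := by
        rw [Finset.mem_insert, Finset.mem_singleton]
        rintro (rfl | rfl)
        · rcases hy' with h | h <;> simp [tsv] at h
        · rcases hz' with h | ⟨j, h⟩ <;> simp [tsv, tcv] at h
      have h2 : y ≠ z := by
        rcases hy' with rfl | rfl <;> rcases hz' with rfl | ⟨j, rfl⟩ <;>
          simp [tsv, tcv]
      rw [Finset.card_insert_of_notMem h1, Finset.card_pair h2]
    calc 3 = ({tsv 3, y, z} : Finset (TVert n m)).card := hcard.symm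
      _ ≤ _ := Finset.card_le_card hsub
  rw [hfib, Fin.sum_univ_castSucc]
  have hsum : 2 * n ≤ ∑ i : Fin n, (D.filter fun v => reg v = i.castSucc).card := by
    calc 2 * n = ∑ _i : Fin n, 2 := by simp [Finset.sum_const, Finset.card_univ, mul_comm]
      _ ≤ _ := Finset.sum_le_sum fun i _ => hgad i
  omega

end lower


section main
variable (C)

lemma ub_of_tds {F : Set (Sym2 (TVert n m))} {l : Fin n → Bool} {t : Fin 3 → TVert n m}
    (h : IsTotalDomSet ((totGraph C).deleteEdges F) (stdD l t)) :
    totalDomNum ((totGraph C).deleteEdges F) ≤ 2 * n + 3 :=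
  le_trans (tdn_le_card h) (stdD_card l t)

lemma per_edge (a b : TVert n m) (hne : a ≠ b) (hrel : totRel C a b) :
    totalDomNum ((totGraph C).deleteEdges {s(a, b)}) ≤ 2 * n + 3 ∨
      totalDomNum ((totGraph C).deleteEdges {s(a, b)}) = 0 := by
  rcases a with ⟨i, ba⟩ | ⟨⟨i, ca⟩ | j | p⟩
  · rcases b with ⟨i', bb⟩ | ⟨⟨i', cb⟩ | j' | q⟩
    · obtain ⟨rfl, -⟩ := hrel
      exact Or.inl (ub_of_tds C (tds_litlit C i ba bb))
    · obtain ⟨rfl, rfl⟩ := hrel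
      exact Or.inl (ub_of_tds C (tds_litvv C i ba))
    · exact Or.inl (ub_of_tds C (tds_litclause C (i, ba) j'))
    · exact hrel.elim
  · rcases b with ⟨i', bb⟩ | ⟨⟨i', cb⟩ | j' | q⟩
    · cases ca <;> exact hrel.elim
    · cases ca <;> cases cb
      · exact hrel.elim
      · have h' : i = i' := hrel
        subst h'
        exact Or.inr (tdn_vv'_zero C i)
      · exact hrel.elim
      · exact hrel.elim
    · cases ca <;> exact hrel.elim
    · cases ca <;> exact hrel.elim
  · rcases b with ⟨i', bb⟩ | ⟨⟨i', cb⟩ | j' | q⟩ <;> exact hrel.elim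
  · rcases b with ⟨i', bb⟩ | ⟨⟨i', cb⟩ | j' | q⟩
    · exact hrel.elim
    · exact hrel.elim
    · rcases hrel with rfl | rfl
      · exact Or.inl (ub_of_tds C (tds_s1clause C j'))
      · exact Or.inl (ub_of_tds C (tds_s3clause C j'))
    · rcases hrel with ⟨rfl, rfl⟩ | ⟨rfl, rfl⟩ | ⟨rfl, rfl⟩ | ⟨rfl, rfl⟩ | ⟨rfl, rfl⟩
      · exact Or.inl (ub_of_tds C (tds_s12 C))
      · exact Or.inl (ub_of_tds C (tds_s14 C))
      · rcases Nat.eq_zero_or_pos m with hm | hm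
        · exact Or.inr (tdn_s23_zero C hm)
        · exact Or.inl (ub_of_tds C (tds_s23 C ⟨0, hm⟩))
      · exact Or.inl (ub_of_tds C tds_s24)
      · exact Or.inr (tdn_s45_zero C)

lemma tds_G : IsTotalDomSet (totGraph C)
    (stdD (fun _ => true) ![(tsv 0 : TVert n m), tsv 1, tsv 3]) := by
  have h := tds_empty C
  rwa [SimpleGraph.deleteEdges_empty] at h

lemma lbG : 2 * n + 2 ≤ totalDomNum (totGraph C) := by
  refine le_tdn ⟨_, tds_G C⟩ fun D hD => ?_
  exact card_lower (C := C) (F := (∅ : Set (Sym2 (TVert n m))))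
    (by rwa [SimpleGraph.deleteEdges_empty])

lemma tdn_del24 :
    totalDomNum ((totGraph C).deleteEdges {s((tsv 1 : TVert n m), tsv 3)}) = 2 * n + 3 := by
  refine le_antisymm (ub_of_tds C tds_s24) ?_
  exact le_tdn ⟨_, tds_s24 (C := C)⟩ fun D hD => card_lower24 hD

end main
end TBaux

/-- In the total-bondage construction, `γ_t(G) = 2n + 2` iff `b_t(G) = 1`. -/
theorem totGraph_totalDomNum_iff_totalBondage_one {n m : ℕ}
    (C : Fin m → Fin 3 → Lit n) :
    totalDomNum (totGraph C) = 2 * n + 2 ↔ totalBondage (totGraph C) = 1 := by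
  open TBaux in
  constructor
  · intro h
    have h1mem : 1 ∈ {k | ∃ F : Finset (Sym2 (TVert n m)), ↑F ⊆ (totGraph C).edgeSet ∧
        F.card = k ∧ totalDomNum (totGraph C) <
          totalDomNum ((totGraph C).deleteEdges ↑F)} := by
      refine ⟨{s((tsv 1 : TVert n m), tsv 3)}, ?_, Finset.card_singleton _, ?_⟩
      · intro e he
        rw [Finset.coe_singleton, Set.mem_singleton_iff] at he
        subst he
        rw [SimpleGraph.mem_edgeSet, totGraph, SimpleGraph.fromRel_adj]
        exact ⟨by simp [tsv], Or.inl (Or.inr (Or.inr (Or.inr (Or.inl ⟨rfl, rfl⟩))))⟩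
      · rw [Finset.coe_singleton, tdn_del24 C, h]
        omega
    have h0 : (0 : ℕ) ∉ {k | ∃ F : Finset (Sym2 (TVert n m)), ↑F ⊆ (totGraph C).edgeSet ∧
        F.card = k ∧ totalDomNum (totGraph C) <
          totalDomNum ((totGraph C).deleteEdges ↑F)} := by
      rintro ⟨F, -, hc, hlt⟩
      rw [Finset.card_eq_zero.mp hc] at hlt
      simp only [Finset.coe_empty, SimpleGraph.deleteEdges_empty] at hlt
      exact lt_irrefl _ hlt
    rw [totalBondage]
    have hle := Nat.sInf_le h1mem
    have hmem := Nat.sInf_mem (s := {k | ∃ F : Finset (Sym2 (TVert n m)),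
        ↑F ⊆ (totGraph C).edgeSet ∧ F.card = k ∧ totalDomNum (totGraph C) <
          totalDomNum ((totGraph C).deleteEdges ↑F)}) ⟨1, h1mem⟩
    rcases Nat.eq_zero_or_pos (sInf {k | ∃ F : Finset (Sym2 (TVert n m)),
        ↑F ⊆ (totGraph C).edgeSet ∧ F.card = k ∧ totalDomNum (totGraph C) <
          totalDomNum ((totGraph C).deleteEdges ↑F)}) with h' | h'
    · rw [h'] at hmem
      exact absurd hmem h0
    · omega
  · intro h
    have hTne : {k | ∃ F : Finset (Sym2 (TVert n m)), ↑F ⊆ (totGraph C).edgeSet ∧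
        F.card = k ∧ totalDomNum (totGraph C) <
          totalDomNum ((totGraph C).deleteEdges ↑F)}.Nonempty := by
      by_contra h'
      rw [Set.not_nonempty_iff_eq_empty] at h'
      rw [totalBondage, h', Nat.sInf_empty] at h
      exact absurd h one_ne_zero.symm
    have h1 : 1 ∈ {k | ∃ F : Finset (Sym2 (TVert n m)), ↑F ⊆ (totGraph C).edgeSet ∧
        F.card = k ∧ totalDomNum (totGraph C) <
          totalDomNum ((totGraph C).deleteEdges ↑F)} := by
      have := Nat.sInf_mem hTne
      rwa [show sInf {k | ∃ F : Finset (Sym2 (TVert n m)), ↑F ⊆ (totGraph C).edgeSet ∧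
        F.card = k ∧ totalDomNum (totGraph C) <
          totalDomNum ((totGraph C).deleteEdges ↑F)} = 1 from h] at this
    obtain ⟨F, hFsub, hc, hlt⟩ := h1
    obtain ⟨e, rfl⟩ := Finset.card_eq_one.mp hc
    rw [Finset.coe_singleton] at hlt hFsub
    have he : e ∈ (totGraph C).edgeSet := hFsub rfl
    revert hlt he
    induction e using Sym2.ind with
    | _ a b =>
      intro hlt he
      rw [SimpleGraph.mem_edgeSet, totGraph, SimpleGraph.fromRel_adj] at he
      obtain ⟨hne, hrel | hrel⟩ := he
      · rcases per_edge C a b hne hrel with hub | hz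
        · have := lbG C
          omega
        · rw [hz] at hlt
          exact absurd hlt (Nat.not_lt_zero _)
      · rw [Sym2.eq_swap] at hlt
        rcases per_edge C b a (Ne.symm hne) hrel with hub | hz
        · have := lbG C
          omega
        · rw [hz] at hlt
          exact absurd hlt (Nat.not_lt_zero _)
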